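/- Let B be an absolutely James boundary of a Banach lattice E. If (x_n) is a norm-bounded sequence in E such that |g|(|x_n|) → 0 for all g in B, then |f|(|x_n|) → 0 for all f in E*. -/

import Mathlib

/-!
Suppose `|f|(|xₙ|) ≥ δ > 0` along a subsequence. The functions `y ↦ |y|(|xₙ|)` on the dual unit
ball are uniformly bounded, and on the positive cone `z ↦ |y|(z)` is additive, positively
homogeneous and continuous, so a convex series `∑ lₙ |y|(|xₙ|)` is `|y|(z)` with
`z = ∑ lₙ |xₙ| ≥ 0`. Its supremum over the ball is `‖z‖`, attained on `B` because `B` is an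
absolutely James boundary, and at the (scaled) point `f` it is at least `δ`. Simons' inequality
then gives `g ∈ B` with `|g|(|xₙ|) > δ / 2` infinitely often along the subsequence, contradicting
`|g|(|xₙ|) → 0`.
-/

open Filter Topology NormedSpace

/-- `dAbs f x` represents `|f|(x)` for a functional `f` on a Banach lattice,
via the Riesz–Kantorovich formula `|f|(x) = sup { f y : |y| ≤ x }` (for `x ≥ 0`). -/
noncomputable def dAbs {E : Type*} [NormedAddCommGroup E] [Lattice E] [HasSolidNorm E] [IsOrderedAddMonoid E] [NormedSpace ℝ E]
    (f : E →L[ℝ] ℝ) (x : E) : ℝ :=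
  sSup (f '' {y | |y| ≤ x})

def IsPosOp {E F : Type*} [NormedAddCommGroup E] [Lattice E] [HasSolidNorm E] [IsOrderedAddMonoid E] [NormedSpace ℝ E]
    [NormedAddCommGroup F] [Lattice F] [HasSolidNorm F] [IsOrderedAddMonoid F] [NormedSpace ℝ F] (T : E →L[ℝ] F) : Prop :=
  ∀ x : E, 0 ≤ x → 0 ≤ T x

def OpLe {E F : Type*} [NormedAddCommGroup E] [Lattice E] [HasSolidNorm E] [IsOrderedAddMonoid E] [NormedSpace ℝ E]
    [NormedAddCommGroup F] [Lattice F] [HasSolidNorm F] [IsOrderedAddMonoid F] [NormedSpace ℝ F] (T S : E →L[ℝ] F) : Prop :=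
  ∀ x : E, 0 ≤ x → T x ≤ S x

def IsModulus {E F : Type*} [NormedAddCommGroup E] [Lattice E] [HasSolidNorm E] [IsOrderedAddMonoid E] [NormedSpace ℝ E]
    [NormedAddCommGroup F] [Lattice F] [HasSolidNorm F] [IsOrderedAddMonoid F] [NormedSpace ℝ F] (T m : E →L[ℝ] F) : Prop :=
  OpLe T m ∧ OpLe (-T) m ∧ ∀ S : E →L[ℝ] F, OpLe T S → OpLe (-T) S → OpLe m S

open scoped Pointwise

theorem exists_add_eq_of_abs_le_add {G : Type*} [AddCommGroup G] [Lattice G] [IsOrderedAddMonoid G]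
    {y u v : G} (hu : 0 ≤ u) (hv : 0 ≤ v) (h : |y| ≤ u + v) :
    ∃ y₁ y₂ : G, y₁ + y₂ = y ∧ |y₁| ≤ u ∧ |y₂| ≤ v := by
  have hy : y ≤ u + v := (le_abs_self y).trans h
  have hy' : -y ≤ u + v := (neg_le_abs y).trans h
  refine ⟨(y ⊔ -u) ⊓ u, y - (y ⊔ -u) ⊓ u, add_sub_cancel _ _, abs_le'.2 ⟨inf_le_right, ?_⟩,
    abs_le'.2 ⟨?_, ?_⟩⟩
  · exact neg_le.1 (le_inf le_sup_right ((neg_nonpos.2 hu).trans hu))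
  · rw [sub_le_comm]
    exact le_inf (le_sup_of_le_left (sub_le_self y hv)) (sub_le_iff_le_add.2 hy)
  · rw [neg_sub, sub_le_iff_le_add]
    refine inf_le_left.trans (sup_le (le_add_of_nonneg_left hv) ?_)
    calc -u = v + -(u + v) := by abel
      _ ≤ v + y := add_le_add_right (neg_le.1 hy') v

/-- An almost minimizer of `i ↦ sup φᵢ` on `S`: `sup φᵢ ≤ sup φⱼ + η`, written pointwise. -/
theorem exists_forall_exists_le_add {ι X : Type*} [Nonempty X] {S : Set ι} (hS : S.Nonempty)
    {φ : ι → X → ℝ} {C : ℝ} (hC : ∀ i ∈ S, ∀ x, |φ i x| ≤ C) {η : ℝ} (hη : 0 < η) :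
    ∃ i ∈ S, ∀ j ∈ S, ∀ x, ∃ y, φ i x ≤ φ j y + η := by
  have le_iSup : ∀ i ∈ S, ∀ x, φ i x ≤ ⨆ y, φ i y := fun i hi x =>
    le_ciSup ⟨C, by rintro _ ⟨y, rfl⟩; exact (abs_le.1 (hC i hi y)).2⟩ x
  have hbdd : BddBelow ((fun i => ⨆ y, φ i y) '' S) := ⟨-C, by
    rintro _ ⟨i, hi, rfl⟩
    exact (abs_le.1 (hC i hi (Classical.arbitrary X))).1.trans (le_iSup i hi _)⟩
  obtain ⟨_, ⟨i, hi, rfl⟩, hi_lt⟩ :=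
    exists_lt_of_csInf_lt (hS.image fun i => ⨆ y, φ i y) (lt_add_of_pos_right _ hη)
  refine ⟨i, hi, fun j hj x => ?_⟩
  have : φ i x - η < ⨆ y, φ j y := by
    linarith [le_iSup i hi x, csInf_le hbdd ⟨j, hj, rfl⟩]
  obtain ⟨y, hy⟩ := exists_lt_of_lt_ciSup this
  exact ⟨y, by linarith⟩

theorem exists_lt_of_add_le_succ {a : ℕ → ℝ} {c : ℝ} (hc : 0 < c) {N : ℕ}
    (h : ∀ k, N ≤ k → a k + c ≤ a (k + 1)) (M : ℝ) : ∃ k, M < a k := by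
  have hgrow : ∀ j : ℕ, a N + j * c ≤ a (N + j) := by
    intro j
    induction j with
    | zero => simp
    | succ j ih =>
      rw [← add_assoc]
      push_cast
      linarith [h (N + j) (Nat.le_add_right N j)]
  obtain ⟨j, hj⟩ := exists_nat_gt ((M - a N) / c)
  rw [div_lt_iff₀ hc] at hj
  exact ⟨N + j, by linarith [hgrow j]⟩

section NormedLattice

variable {E : Type*} [NormedAddCommGroup E] [Lattice E] [HasSolidNorm E] [NormedSpace ℝ E]

theorem ContinuousLinearMap.apply_le_opNorm_mul_of_abs_le (f : E →L[ℝ] ℝ) {x y : E}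
    (h : |y| ≤ x) : f y ≤ ‖f‖ * ‖x‖ :=
  (le_abs_self _).trans <| f.le_opNorm_of_le <| HasSolidNorm.solid (h.trans (le_abs_self x))

theorem bddAbove_image_setOf_abs_le (f : E →L[ℝ] ℝ) (x : E) : BddAbove (f '' {y | |y| ≤ x}) :=
  ⟨‖f‖ * ‖x‖, by rintro _ ⟨y, hy, rfl⟩; exact f.apply_le_opNorm_mul_of_abs_le hy⟩

variable [IsOrderedAddMonoid E]

/-- The positive cone is closed and stable under halving, and dyadic rationals approximate `c`. -/
theorem HasSolidNorm.smul_nonneg {c : ℝ} (hc : 0 ≤ c) {y : E} (hy : 0 ≤ y) : 0 ≤ c • y := by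
  have dyadic : ∀ k m : ℕ, 0 ≤ ((m : ℝ) / 2 ^ k) • y := by
    intro k
    induction k with
    | zero => intro m; simpa [Nat.cast_smul_eq_nsmul] using nsmul_nonneg hy m
    | succ k ih =>
      intro m
      refine nsmul_two_semiclosed ?_
      rw [← Nat.cast_smul_eq_nsmul ℝ, smul_smul]
      convert ih m using 2
      rw [pow_succ]
      field_simp
      push_cast
      ring
  have approx : Tendsto (fun k : ℕ => (⌊c * 2 ^ k⌋₊ : ℝ) / 2 ^ k) atTop (𝓝 c) :=
    (tendsto_nat_floor_mul_div_atTop hc).comp (tendsto_pow_atTop_atTop_of_one_lt one_lt_two)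
  exact isClosed_nonneg.mem_of_tendsto (approx.smul_const y)
    (Eventually.of_forall fun k => dyadic k _)

instance HasSolidNorm.posSMulMono : PosSMulMono ℝ E :=
  PosSMulMono.of_smul_nonneg fun _ hc _ hy => HasSolidNorm.smul_nonneg hc hy

theorem abs_smul_of_nonneg {c : ℝ} (hc : 0 ≤ c) (y : E) : |c • y| = c • |y| := by
  rcases hc.eq_or_lt with rfl | hc
  · simp
  · rw [abs, abs, ← smul_neg]
    exact ((OrderIso.smulRight hc).map_sup y (-y)).symm

end NormedLattice

theorem nonempty_image_setOf_abs_le {E F : Type*} [AddCommGroup E] [Lattice E]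
    [IsOrderedAddMonoid E] (f : E → F) {x : E} (hx : 0 ≤ x) : (f '' {y | |y| ≤ x}).Nonempty :=
  ⟨f 0, 0, by simpa using hx, rfl⟩

section dAbs

variable {E : Type*} [NormedAddCommGroup E] [Lattice E] [HasSolidNorm E] [IsOrderedAddMonoid E]
  [NormedSpace ℝ E] (f : E →L[ℝ] ℝ) {x y u v : E}

theorem le_dAbs (h : |y| ≤ x) : f y ≤ dAbs f x :=
  le_csSup (bddAbove_image_setOf_abs_le f x) ⟨y, h, rfl⟩

theorem dAbs_le {a : ℝ} (hx : 0 ≤ x) (h : ∀ y, |y| ≤ x → f y ≤ a) : dAbs f x ≤ a :=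
  csSup_le (nonempty_image_setOf_abs_le f hx) (by rintro _ ⟨y, hy, rfl⟩; exact h y hy)

theorem dAbs_nonneg (hx : 0 ≤ x) : 0 ≤ dAbs f x := by
  simpa using le_dAbs f (y := 0) (by simpa using hx)

theorem dAbs_le_opNorm_mul (hx : 0 ≤ x) : dAbs f x ≤ ‖f‖ * ‖x‖ :=
  dAbs_le f hx fun _ hy => f.apply_le_opNorm_mul_of_abs_le hy

theorem dAbs_mono (hu : 0 ≤ u) (h : u ≤ v) : dAbs f u ≤ dAbs f v :=
  dAbs_le f hu fun _ hy => le_dAbs f (hy.trans h)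

theorem dAbs_add (hu : 0 ≤ u) (hv : 0 ≤ v) : dAbs f (u + v) = dAbs f u + dAbs f v := by
  refine le_antisymm (dAbs_le f (add_nonneg hu hv) fun y hy => ?_) ?_
  · obtain ⟨y₁, y₂, rfl, h₁, h₂⟩ := exists_add_eq_of_abs_le_add hu hv hy
    rw [map_add]
    exact add_le_add (le_dAbs f h₁) (le_dAbs f h₂)
  · have hu' := nonempty_image_setOf_abs_le f hu
    have hv' := nonempty_image_setOf_abs_le f hv
    rw [dAbs, dAbs, ← csSup_add hu' (bddAbove_image_setOf_abs_le f u) hv'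
      (bddAbove_image_setOf_abs_le f v)]
    refine csSup_le_csSup (bddAbove_image_setOf_abs_le f _) (hu'.add hv') ?_
    rintro _ ⟨_, ⟨y₁, h₁, rfl⟩, _, ⟨y₂, h₂, rfl⟩, rfl⟩
    exact ⟨y₁ + y₂, (abs_add_le y₁ y₂).trans (add_le_add h₁ h₂), map_add f y₁ y₂⟩

theorem dAbs_zero : dAbs f 0 = 0 := by
  have h := dAbs_add f (le_refl (0 : E)) le_rfl
  rwa [add_zero, left_eq_add] at h

theorem dAbs_smul_right {c : ℝ} (hc : 0 ≤ c) (x : E) : dAbs f (c • x) = c * dAbs f x := by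
  rcases hc.eq_or_lt with rfl | hc
  · rw [zero_smul, dAbs_zero, zero_mul]
  · have : {y : E | |y| ≤ c • x} = c • {y | |y| ≤ x} := by
      ext y
      rw [Set.mem_smul_set_iff_inv_smul_mem₀ hc.ne', Set.mem_ofPred_eq, Set.mem_ofPred_eq,
        abs_smul_of_nonneg (inv_nonneg.2 hc.le), inv_smul_le_iff_of_pos hc]
    rw [dAbs, dAbs, this, image_smul_set, Real.sSup_smul_of_nonneg hc.le, smul_eq_mul]

theorem dAbs_smul_left {c : ℝ} (hc : 0 ≤ c) (x : E) : dAbs (c • f) x = c * dAbs f x := by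
  rw [dAbs, dAbs, ← smul_eq_mul, ← Real.sSup_smul_of_nonneg hc, ← Set.image_smul, Set.image_image]
  rfl

theorem lipschitzOnWith_dAbs : LipschitzOnWith ‖f‖₊ (dAbs f) {x | 0 ≤ x} := by
  refine LipschitzOnWith.of_le_add_mul _ fun u hu v hv => ?_
  calc dAbs f u ≤ dAbs f (v + |u - v|) := dAbs_mono f hu (sub_le_iff_le_add'.1 (le_abs_self _))
    _ = dAbs f v + dAbs f |u - v| := dAbs_add f hv (abs_nonneg _)
    _ ≤ dAbs f v + ‖f‖ * dist u v := by
      grw [dAbs_le_opNorm_mul f (abs_nonneg _), norm_abs_eq_norm, dist_eq_norm]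

theorem dAbs_sum {ι : Type*} (s : Finset ι) {v : ι → E} (hv : ∀ i ∈ s, 0 ≤ v i) :
    dAbs f (∑ i ∈ s, v i) = ∑ i ∈ s, dAbs f (v i) := by
  induction s using Finset.cons_induction with
  | empty => simp [dAbs_zero]
  | cons i s hi ih =>
    rw [Finset.forall_mem_cons] at hv
    rw [Finset.sum_cons, Finset.sum_cons, dAbs_add f hv.1 (Finset.sum_nonneg hv.2), ih hv.2]

theorem hasSum_dAbs_tsum {l : ℕ → ℝ} {u : ℕ → E} (hl : ∀ k, 0 ≤ l k) (hu : ∀ k, 0 ≤ u k)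
    (hs : Summable fun k => l k • u k) :
    HasSum (fun k => l k * dAbs f (u k)) (dAbs f (∑' k, l k • u k)) := by
  have hterm : ∀ k, 0 ≤ l k • u k := fun k => smul_nonneg (hl k) (hu k)
  have hpartial : ∀ n, ∑ k ∈ Finset.range n, l k * dAbs f (u k) =
      dAbs f (∑ k ∈ Finset.range n, l k • u k) := fun n => by
    rw [dAbs_sum f _ fun k _ => hterm k]
    exact Finset.sum_congr rfl fun k _ => (dAbs_smul_right f (hl k) (u k)).symm
  rw [hasSum_iff_tendsto_nat_of_nonneg fun k => mul_nonneg (hl k) (dAbs_nonneg f (hu k))]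
  simp_rw [hpartial]
  refine ((lipschitzOnWith_dAbs f).continuousOn _ (tsum_nonneg hterm)).tendsto.comp ?_
  exact tendsto_nhdsWithin_iff.2 ⟨hs.hasSum.tendsto_sum_nat,
    Eventually.of_forall fun n => Finset.sum_nonneg fun k _ => hterm k⟩

end dAbs

section Simons

variable {X : Type*} {f : ℕ → X → ℝ} {M : ℝ} {k : ℕ} {l c : ℕ → ℝ}
  {g : ℕ → X → ℝ}

structure IsConvexWeightsFrom (k : ℕ) (l : ℕ → ℝ) : Prop where
  nonneg : ∀ n, 0 ≤ l n
  hasSum : HasSum l 1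
  eq_zero_of_lt : ∀ n < k, l n = 0

variable (f) in
/-- Simons' `co_σ {fₙ : n ≥ k}`. -/
def convexSeriesFrom (k : ℕ) : Set (X → ℝ) :=
  {u | ∃ l, IsConvexWeightsFrom k l ∧ u = fun x => ∑' n, l n * f n x}

namespace IsConvexWeightsFrom

theorem mono {k' : ℕ} (hl : IsConvexWeightsFrom k l) (h : k' ≤ k) : IsConvexWeightsFrom k' l :=
  ⟨hl.nonneg, hl.hasSum, fun n hn => hl.eq_zero_of_lt n (hn.trans_le h)⟩

theorem single (k : ℕ) : IsConvexWeightsFrom k (Pi.single k 1) := by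
  refine ⟨fun n => ?_, hasSum_pi_single k 1, fun n hn => Pi.single_eq_of_ne hn.ne 1⟩
  rcases eq_or_ne n k with rfl | h
  · simp
  · simp [Pi.single_eq_of_ne h]

theorem summable_mul (hl : IsConvexWeightsFrom k l) (hc : ∀ n, |c n| ≤ M) :
    Summable fun n => l n * c n :=
  .of_norm_bounded (hl.hasSum.summable.mul_right M) fun n => by
    rw [Real.norm_eq_abs, abs_mul, abs_of_nonneg (hl.nonneg n)]
    exact mul_le_mul_of_nonneg_left (hc n) (hl.nonneg n)

theorem tsum_mul_le (hl : IsConvexWeightsFrom k l) (hc : ∀ n, |c n| ≤ M) {a : ℝ}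
    (ha : ∀ n, k ≤ n → c n ≤ a) : ∑' n, l n * c n ≤ a := by
  calc ∑' n, l n * c n ≤ ∑' n, l n * a := by
        refine (hl.summable_mul hc).tsum_le_tsum (fun n => ?_) (hl.hasSum.summable.mul_right a)
        rcases lt_or_ge n k with hn | hn
        · simp [hl.eq_zero_of_lt n hn]
        · exact mul_le_mul_of_nonneg_left (ha n hn) (hl.nonneg n)
    _ = a := by rw [tsum_mul_right, hl.hasSum.tsum_eq, one_mul]

theorem le_tsum_mul (hl : IsConvexWeightsFrom k l) (hc : ∀ n, |c n| ≤ M) {a : ℝ}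
    (ha : ∀ n, k ≤ n → a ≤ c n) : a ≤ ∑' n, l n * c n := by
  have := hl.tsum_mul_le (c := fun n => -c n) (by simpa using hc) (a := -a) (by simpa using ha)
  simpa [tsum_neg] using this

end IsConvexWeightsFrom

theorem self_mem_convexSeriesFrom (f : ℕ → X → ℝ) (k : ℕ) : f k ∈ convexSeriesFrom f k :=
  ⟨_, .single k, funext fun x => by rw [tsum_eq_single k fun n hn => by simp [hn]]; simp⟩

theorem convexSeriesFrom_anti (f : ℕ → X → ℝ) : Antitone (convexSeriesFrom f) := by
  rintro k' k h _ ⟨l, hl, rfl⟩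
  exact ⟨l, hl.mono h, rfl⟩

theorem abs_le_of_mem_convexSeriesFrom (hf : ∀ n x, |f n x| ≤ M) {u : X → ℝ}
    (hu : u ∈ convexSeriesFrom f k) (x : X) : |u x| ≤ M := by
  obtain ⟨l, hl, rfl⟩ := hu
  exact abs_le.2 ⟨hl.le_tsum_mul (hf · x) fun n _ => (abs_le.1 (hf n x)).1,
    hl.tsum_mul_le (hf · x) fun n _ => (abs_le.1 (hf n x)).2⟩

theorem tsum_mul_mem_convexSeriesFrom (hf : ∀ n x, |f n x| ≤ M) {μ : ℕ → ℝ}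
    (hμ : IsConvexWeightsFrom 0 μ) {u : ℕ → X → ℝ} (hu : ∀ j, u j ∈ convexSeriesFrom f k) :
    (fun x => ∑' j, μ j * u j x) ∈ convexSeriesFrom f k := by
  choose l hl hul using hu
  set F : ℕ × ℕ → ℝ := fun p => μ p.1 * l p.1 p.2 with hF_def
  have hF0 : ∀ p, 0 ≤ F p := fun p => mul_nonneg (hμ.nonneg _) ((hl _).nonneg _)
  have hF : Summable F := by
    refine (summable_prod_of_nonneg fun p => hF0 p).2 ⟨fun j => ?_, ?_⟩
    · exact (hl j).hasSum.summable.mul_left (μ j)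
    · simpa only [hF_def, tsum_mul_left, (hl _).hasSum.tsum_eq, mul_one] using hμ.hasSum.summable
  have fubini : ∀ (c : ℕ → ℝ) (C : ℝ), (∀ n, |c n| ≤ C) →
      ∑' n, (∑' j, μ j * l j n) * c n = ∑' j, μ j * ∑' n, l j n * c n := by
    intro c C hc
    have hG : Summable fun p : ℕ × ℕ => F p * c p.2 :=
      .of_norm_bounded (hF.mul_right C) fun p => by
        rw [Real.norm_eq_abs, abs_mul, abs_of_nonneg (hF0 p)]
        exact mul_le_mul_of_nonneg_left (hc p.2) (hF0 p)
    calc ∑' n, (∑' j, μ j * l j n) * c n = ∑' n, ∑' j, F (j, n) * c n := by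
          simp_rw [← tsum_mul_right]
          rfl
      _ = ∑' j, ∑' n, F (j, n) * c n := Summable.tsum_comm (f := fun j n => F (j, n) * c n) hG
      _ = ∑' j, μ j * ∑' n, l j n * c n := by simp_rw [hF_def, mul_assoc, tsum_mul_left]
  refine ⟨fun n => ∑' j, μ j * l j n, ⟨fun n => tsum_nonneg fun j => hF0 (j, n), ?_,
    fun n hn => by simp [(hl _).eq_zero_of_lt n hn]⟩, funext fun x => ?_⟩
  · have h1 := fubini (fun _ => 1) 1 (by simp)
    simp only [mul_one, (hl _).hasSum.tsum_eq, hμ.hasSum.tsum_eq] at h1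
    exact (hF.prod_symm.prod).hasSum_iff.2 h1
  · rw [fubini (f · x) M (hf · x)]
    simp_rw [hul]

variable (f) in
/-- Simons' sequence: each `g k` is a convex series from `k` which, added with weight `2⁻ᵏ` to
`∑_{i<k} 2^{-(i+1)} gᵢ`, has supremum within `η 4⁻ᵏ` of the least one possible. -/
structure IsSimonsSequence (η : ℝ) (g : ℕ → X → ℝ) : Prop where
  mem : ∀ k, g k ∈ convexSeriesFrom f k
  nearly_min : ∀ k, ∀ v ∈ convexSeriesFrom f k, ∀ x, ∃ y,
    ∑ i ∈ Finset.range k, 2⁻¹ ^ (i + 1) * g i x + 2⁻¹ ^ k * g k x ≤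
      ∑ i ∈ Finset.range k, 2⁻¹ ^ (i + 1) * g i y + 2⁻¹ ^ k * v y + η * 4⁻¹ ^ k

theorem exists_mem_convexSeriesFrom_nearly_min [Nonempty X] (hf : ∀ n x, |f n x| ≤ M) (k : ℕ)
    {s : X → ℝ} (hs : ∀ x, |s x| ≤ M) {η : ℝ} (hη : 0 < η) :
    ∃ g ∈ convexSeriesFrom f k, ∀ v ∈ convexSeriesFrom f k, ∀ x, ∃ y,
      s x + 2⁻¹ ^ k * g x ≤ s y + 2⁻¹ ^ k * v y + η := by
  refine exists_forall_exists_le_add ⟨f k, self_mem_convexSeriesFrom f k⟩ (C := M + M)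
    (fun v hv x => (abs_add_le _ _).trans (add_le_add (hs x) ?_)) hη
  rw [abs_mul, abs_of_pos (by positivity)]
  exact (mul_le_of_le_one_left (abs_nonneg _) (pow_le_one₀ (by norm_num) (by norm_num))).trans
    (abs_le_of_mem_convexSeriesFrom hf hv x)

theorem exists_isSimonsSequence [Nonempty X] (hf : ∀ n x, |f n x| ≤ M) {η : ℝ} (hη : 0 < η) :
    ∃ g, IsSimonsSequence f η g := by
  have hM : 0 ≤ M := (abs_nonneg _).trans (hf 0 (Classical.arbitrary X))
  -- The bound on `s` is a premise so that `choose` below defines `G k s` for every `s`.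
  have step : ∀ (k : ℕ) (s : X → ℝ), ∃ g ∈ convexSeriesFrom f k, (∀ x, |s x| ≤ M) →
      ∀ v ∈ convexSeriesFrom f k, ∀ x, ∃ y,
        s x + 2⁻¹ ^ k * g x ≤ s y + 2⁻¹ ^ k * v y + η * 4⁻¹ ^ k := by
    intro k s
    by_cases hs : ∀ x, |s x| ≤ M
    · obtain ⟨g, hg, hmin⟩ := exists_mem_convexSeriesFrom_nearly_min hf k hs
        (by positivity : 0 < η * 4⁻¹ ^ k)
      exact ⟨g, hg, fun _ => hmin⟩
    · exact ⟨f k, self_mem_convexSeriesFrom f k, fun h => absurd h hs⟩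
  choose G hG hGmin using step
  let σ : ℕ → X → ℝ := fun k =>
    Nat.rec (motive := fun _ => X → ℝ) 0 (fun k s => s + (2⁻¹ : ℝ) ^ (k + 1) • G k s) k
  have hσ_succ : ∀ k, σ (k + 1) = σ k + (2⁻¹ : ℝ) ^ (k + 1) • G k (σ k) := fun k => rfl
  have hσ_sum : ∀ k x, σ k x = ∑ i ∈ Finset.range k, 2⁻¹ ^ (i + 1) * G i (σ i) x := by
    intro k x
    induction k with
    | zero => rfl
    | succ k ih => rw [hσ_succ, Finset.sum_range_succ, ← ih]; rfl
  have hσ_bound : ∀ k x, |σ k x| ≤ (1 - 2⁻¹ ^ k) * M := by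
    intro k x
    induction k with
    | zero => simp [σ]
    | succ k ih =>
      rw [hσ_succ, Pi.add_apply, Pi.smul_apply, smul_eq_mul]
      have hG := abs_le_of_mem_convexSeriesFrom hf (hG k (σ k)) x
      calc |σ k x + 2⁻¹ ^ (k + 1) * G k (σ k) x|
          ≤ |σ k x| + 2⁻¹ ^ (k + 1) * |G k (σ k) x| := by
            grw [abs_add_le, abs_mul, abs_of_nonneg (by positivity : (0:ℝ) ≤ 2⁻¹ ^ (k + 1))]
        _ ≤ (1 - 2⁻¹ ^ k) * M + 2⁻¹ ^ (k + 1) * M := by gcongr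
        _ = (1 - 2⁻¹ ^ (k + 1)) * M := by ring
  refine ⟨fun k => G k (σ k), ⟨fun k => hG k _, fun k v hv x => ?_⟩⟩
  simp_rw [← hσ_sum]
  refine hGmin k (σ k) (fun x => (hσ_bound k x).trans ?_) v hv x
  nlinarith [pow_nonneg (by norm_num : (0:ℝ) ≤ 2⁻¹) k]

theorem isConvexWeightsFrom_geometric : IsConvexWeightsFrom 0 fun i => (2⁻¹ : ℝ) ^ (i + 1) := by
  refine ⟨fun _ => by positivity, ?_, fun _ h => absurd h (Nat.not_lt_zero _)⟩
  convert hasSum_geometric_two' 1 using 1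
  ext i
  rw [pow_succ, inv_pow]
  ring

variable (g) in
noncomputable def geometricTail (k : ℕ) (x : X) : ℝ := ∑' i, 2⁻¹ ^ (i + 1) * g (k + i) x

theorem geometricTail_mem (hf : ∀ n x, |f n x| ≤ M) (hg : ∀ k, g k ∈ convexSeriesFrom f k)
    (k : ℕ) : geometricTail g k ∈ convexSeriesFrom f k :=
  tsum_mul_mem_convexSeriesFrom hf isConvexWeightsFrom_geometric fun i =>
    convexSeriesFrom_anti f (Nat.le_add_right k i) (hg (k + i))

theorem geometricTail_eq (hg : ∀ k x, |g k x| ≤ M) (k : ℕ) (x : X) :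
    geometricTail g k x = 2⁻¹ * g k x + 2⁻¹ * geometricTail g (k + 1) x := by
  rw [geometricTail, geometricTail,
    (isConvexWeightsFrom_geometric.summable_mul fun i => hg (k + i) x).tsum_eq_zero_add,
    ← tsum_mul_left]
  simp_rw [← add_assoc, add_right_comm k, pow_succ, ← mul_assoc]
  ring_nf

theorem geometricTail_zero_eq (hg : ∀ k x, |g k x| ≤ M) (k : ℕ) (x : X) :
    geometricTail g 0 x =
      ∑ i ∈ Finset.range k, 2⁻¹ ^ (i + 1) * g i x + 2⁻¹ ^ k * geometricTail g k x := by
  induction k with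
  | zero => simp
  | succ k ih => rw [ih, geometricTail_eq hg k x, Finset.sum_range_succ]; ring

/-- At a maximizer of the full average, near-minimality of each `g k` keeps every tail average
from dropping by more than `2η` in total. -/
theorem IsSimonsSequence.geometricTail_zero_sub_le (hf : ∀ n x, |f n x| ≤ M) {η : ℝ}
    (hη : 0 ≤ η) (hg : IsSimonsSequence f η g) {b : X}
    (hb : ∀ x, geometricTail g 0 x ≤ geometricTail g 0 b) (k : ℕ) :
    geometricTail g 0 b - 2 * η ≤ geometricTail g k b := by
  have hg_bound : ∀ k x, |g k x| ≤ M := fun k => abs_le_of_mem_convexSeriesFrom hf (hg.mem k)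
  have hgb : ∀ k, g k b ≤ geometricTail g k b + η * 2⁻¹ ^ k := by
    intro k
    obtain ⟨y, hy⟩ := hg.nearly_min k _ (geometricTail_mem hf hg.mem k) b
    have hby := hb y
    rw [geometricTail_zero_eq hg_bound k y, geometricTail_zero_eq hg_bound k b] at hby
    have h4 : (4:ℝ)⁻¹ ^ k = 2⁻¹ ^ k * 2⁻¹ ^ k := by rw [← mul_pow]; norm_num
    rw [h4] at hy
    refine le_of_mul_le_mul_left ?_ (by positivity : (0:ℝ) < 2⁻¹ ^ k)
    linarith
  suffices H : ∀ k, geometricTail g 0 b - 2 * η * (1 - 2⁻¹ ^ k) ≤ geometricTail g k b by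
    nlinarith [H k, pow_nonneg (by norm_num : (0:ℝ) ≤ 2⁻¹) k]
  intro k
  induction k with
  | zero => simp
  | succ k ih => rw [pow_succ]; linarith [geometricTail_eq hg_bound k b, hgb k]

theorem simons_inequality (hf : ∀ n x, |f n x| ≤ M) {B : Set X}
    (hB : ∀ u ∈ convexSeriesFrom f 0, ∃ b ∈ B, ∀ x, u x ≤ u b) {r : ℝ}
    (hr : ∀ u ∈ convexSeriesFrom f 0, ∃ x, r ≤ u x) {ε : ℝ} (hε : 0 < ε) :
    ∃ b ∈ B, ∃ᶠ n in atTop, r - ε < f n b := by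
  have : Nonempty X := let ⟨x, _⟩ := hr _ (self_mem_convexSeriesFrom f 0); ⟨x⟩
  obtain ⟨g, hg⟩ := exists_isSimonsSequence hf (η := ε / 4) (by positivity)
  have hh := geometricTail_mem hf hg.mem
  obtain ⟨b, hbB, hbmax⟩ := hB _ (hh 0)
  have hr0 : r ≤ geometricTail g 0 b := let ⟨y, hy⟩ := hr _ (hh 0); hy.trans (hbmax y)
  have hhb := hg.geometricTail_zero_sub_le hf (by positivity) hbmax
  refine ⟨b, hbB, ?_⟩
  by_contra hev
  obtain ⟨N, hN⟩ := eventually_atTop.1 (not_frequently.1 hev)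
  have hstep : ∀ k, N ≤ k → geometricTail g k b + ε / 2 ≤ geometricTail g (k + 1) b := by
    intro k hk
    obtain ⟨l, hl, hgl⟩ := hg.mem k
    have hgk : g k b ≤ r - ε := by
      rw [hgl]
      exact (hl.mono hk).tsum_mul_le (hf · b) fun n hn => not_lt.1 (hN n hn)
    linarith [geometricTail_eq (fun k => abs_le_of_mem_convexSeriesFrom hf (hg.mem k)) k b, hhb k]
  obtain ⟨k, hk⟩ := exists_lt_of_add_le_succ (by positivity) hstep M
  exact hk.not_ge (abs_le.1 (abs_le_of_mem_convexSeriesFrom hf (hh k) b)).2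

end Simons

section JamesBoundary

variable {E : Type*} [NormedAddCommGroup E] [Lattice E] [HasSolidNorm E] [IsOrderedAddMonoid E]
  [NormedSpace ℝ E] [CompleteSpace E]

theorem exists_mem_frequently_lt_dAbs {B : Set (E →L[ℝ] ℝ)} (hB1 : ∀ g ∈ B, ‖g‖ ≤ 1)
    (hB : ∀ x : E, ∃ g ∈ B, dAbs g |x| = ‖x‖) {u : ℕ → E} (hu : ∀ k, 0 ≤ u k) {C : ℝ}
    (huC : ∀ k, ‖u k‖ ≤ C) {f : E →L[ℝ] ℝ} (hf : ‖f‖ ≤ 1) {δ : ℝ}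
    (hδ : ∀ k, δ ≤ dAbs f (u k)) {ε : ℝ} (hε : 0 < ε) :
    ∃ g ∈ B, ∃ᶠ k in atTop, δ - ε < dAbs g (u k) := by
  let X := Metric.closedBall (0 : E →L[ℝ] ℝ) 1
  have hX : ∀ y : X, ‖(y : E →L[ℝ] ℝ)‖ ≤ 1 := fun y => mem_closedBall_zero_iff.1 y.2
  have dAbs_le_norm : ∀ (y : X) {z : E}, 0 ≤ z → dAbs y z ≤ ‖z‖ := fun y z hz =>
    (dAbs_le_opNorm_mul _ hz).trans (mul_le_of_le_one_left (norm_nonneg z) (hX y))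
  let F : ℕ → X → ℝ := fun k y => dAbs y (u k)
  have hF : ∀ k y, |F k y| ≤ C := fun k y => by
    rw [abs_of_nonneg (dAbs_nonneg _ (hu k))]
    exact (dAbs_le_norm y (hu k)).trans (huC k)
  have hseries : ∀ v ∈ convexSeriesFrom F 0, ∃ z : E, 0 ≤ z ∧ ∀ y : X, v y = dAbs y z := by
    rintro _ ⟨l, hl, rfl⟩
    have hs : Summable fun k => l k • u k :=
      .of_norm_bounded (hl.hasSum.summable.mul_right C) fun k => by
        rw [norm_smul, Real.norm_eq_abs, abs_of_nonneg (hl.nonneg k)]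
        exact mul_le_mul_of_nonneg_left (huC k) (hl.nonneg k)
    exact ⟨_, tsum_nonneg fun k => smul_nonneg (hl.nonneg k) (hu k),
      fun y => (hasSum_dAbs_tsum y.1 hl.nonneg hu hs).tsum_eq⟩
  have hattain : ∀ v ∈ convexSeriesFrom F 0, ∃ b ∈ {y : X | y.1 ∈ B}, ∀ y, v y ≤ v b := by
    intro v hv
    obtain ⟨z, hz, hvz⟩ := hseries v hv
    obtain ⟨g, hgB, hg⟩ := hB z
    rw [abs_of_nonneg hz] at hg
    refine ⟨⟨g, mem_closedBall_zero_iff.2 (hB1 g hgB)⟩, hgB, fun y => ?_⟩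
    rw [hvz, hvz, hg]
    exact dAbs_le_norm y hz
  have hlower : ∀ v ∈ convexSeriesFrom F 0, ∃ y, δ ≤ v y := by
    rintro _ ⟨l, hl, rfl⟩
    exact ⟨⟨f, mem_closedBall_zero_iff.2 hf⟩, hl.le_tsum_mul (hF · _) fun k _ => hδ k⟩
  obtain ⟨b, hbB, hb⟩ := simons_inequality hF hattain hlower hε
  exact ⟨b, hbB, hb⟩

end JamesBoundary

/-- If `B` is an absolutely James boundary of `E` and `(x_n)` is a bounded sequence with
`|g|(|x_n|) → 0` for all `g ∈ B`, then `|f|(|x_n|) → 0` for all `f ∈ E*`. -/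
theorem absJamesBoundary_null {E : Type*} [NormedAddCommGroup E] [Lattice E] [HasSolidNorm E] [IsOrderedAddMonoid E]
    [NormedSpace ℝ E] [CompleteSpace E]
    (B : Set (E →L[ℝ] ℝ)) (hB1 : ∀ g ∈ B, ‖g‖ ≤ 1)
    (hB : ∀ x : E, ∃ g ∈ B, dAbs g |x| = ‖x‖)
    (x : ℕ → E) (hbdd : ∃ C : ℝ, ∀ n, ‖x n‖ ≤ C)
    (h : ∀ g ∈ B, Tendsto (fun n => dAbs g |x n|) atTop (𝓝 0)) :
    ∀ f : E →L[ℝ] ℝ, Tendsto (fun n => dAbs f |x n|) atTop (𝓝 0) := by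
  intro f
  obtain ⟨C, hC⟩ := hbdd
  refine tendsto_order.2
    ⟨fun a ha => .of_forall fun n => ha.trans_le (dAbs_nonneg f (abs_nonneg _)), fun δ hδ => ?_⟩
  by_contra hfreq
  obtain ⟨φ, hφ, hδφ⟩ := extraction_of_frequently_atTop (not_eventually.1 hfreq)
  set c := (‖f‖ + 1)⁻¹ with hc_def
  have hc : 0 < c := by positivity
  have hcf : ‖c • f‖ ≤ 1 := by
    rw [norm_smul, Real.norm_eq_abs, abs_of_pos hc, hc_def, inv_mul_le_one₀ (by positivity)]
    linarith
  have hcδ : ∀ k, c * δ ≤ dAbs (c • f) |x (φ k)| := fun k => by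
    rw [dAbs_smul_left f hc.le]
    exact mul_le_mul_of_nonneg_left (not_lt.1 (hδφ k)) hc.le
  obtain ⟨g, hgB, hg⟩ := exists_mem_frequently_lt_dAbs hB1 hB (u := fun k => |x (φ k)|)
    (fun k => abs_nonneg _) (fun k => (norm_abs_eq_norm _).trans_le (hC _)) hcf hcδ
    (ε := c * δ / 2) (by positivity)
  have hg0 := ((h g hgB).comp hφ.tendsto_atTop).eventually
    (gt_mem_nhds (by linarith [mul_pos hc hδ] : 0 < c * δ - c * δ / 2))
  obtain ⟨k, hk, hk'⟩ := (hg.and_eventually hg0).exists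
  exact lt_asymm hk hk'
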